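/- Let H be a finite-dimensional real inner product space decomposed as H = H_T ⊕ H_F, and let b : H × H → ℝ be bilinear. Suppose for each u_T ∈ H_T there exists a unique u_F(u_T) ∈ H_F with b(u_T + u_F(u_T), v) = 0 for all v ∈ H_F (solvability of the local problems). Then u_F : H_T → H_F is linear, and u ∈ H solves b(u, v) = ℓ(v) for all v ∈ H (with ℓ linear and ℓ|_{H_F} = 0) if and only if u = u_T + u_F(u_T) where u_T ∈ H_T solves the reduced problem b(u_T + u_F(u_T), w) = ℓ(w) for all w ∈ H_T. -/
import Mathlib


/-- Variational multiscale splitting: let `H = H_T ⊕ H_F` be a finite-dimensional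
real inner product space, `b` bilinear, and suppose each `u_T ∈ H_T` has a
unique `u_F(u_T) ∈ H_F` solving the local problems
`b(u_T + u_F(u_T), v) = 0` for all `v ∈ H_F`. Then `u_F` is linear, and for a
linear functional `ℓ` vanishing on `H_F`, `u` solves `b(u, v) = ℓ(v)` for all
`v ∈ H` iff `u = u_T + u_F(u_T)` with `u_T ∈ H_T` solving the reduced problem
`b(u_T + u_F(u_T), w) = ℓ(w)` for all `w ∈ H_T`. -/
theorem variational_multiscale_splitting
    (H : Type*) [NormedAddCommGroup H] [InnerProductSpace ℝ H]
    [FiniteDimensional ℝ H]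
    (HT HF : Submodule ℝ H) (hcompl : IsCompl HT HF)
    (b : H →ₗ[ℝ] H →ₗ[ℝ] ℝ)
    (uF : HT → HF)
    (hlocal : ∀ uT : HT, ∀ v ∈ HF, b ((uT : H) + (uF uT : H)) v = 0)
    (huniq : ∀ uT : HT, ∀ w : HF, (∀ v ∈ HF, b ((uT : H) + (w : H)) v = 0) →
      w = uF uT)
    (ℓ : H →ₗ[ℝ] ℝ) (hℓ : ∀ v ∈ HF, ℓ v = 0) :
    IsLinearMap ℝ (fun uT : HT => ((uF uT : H))) ∧
      ∀ u : H, (∀ v : H, b u v = ℓ v) ↔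
        ∃ uT : HT, u = (uT : H) + (uF uT : H) ∧
          ∀ w ∈ HT, b ((uT : H) + (uF uT : H)) w = ℓ w := by
  constructor
  · constructor
    · intro x y
      have h : uF x + uF y = uF (x + y) := by
        apply huniq
        intro v hv
        have := hlocal x v hv
        have := hlocal y v hv
        push_cast
        have hx := hlocal x v hv
        have hy := hlocal y v hv
        have : b (((x : H) + (uF x : H)) + ((y : H) + (uF y : H))) v = 0 := by
          rw [map_add, LinearMap.add_apply, hx, hy, add_zero]
        convert this using 3
        abel
      rw [← h]; push_cast; ring_nf
    · intro c x
      have h : c • uF x = uF (c • x) := by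
        apply huniq
        intro v hv
        have hx := hlocal x v hv
        have : b (c • ((x : H) + (uF x : H))) v = 0 := by
          rw [map_smul, LinearMap.smul_apply, hx, smul_zero]
        convert this using 3
        push_cast
        module
      rw [← h]; simp
  · intro u
    constructor
    · intro hu
      obtain ⟨p, q, hpq, -⟩ := Submodule.existsUnique_add_of_isCompl hcompl u
      have hq : q = uF p := by
        apply huniq
        intro v hv
        rw [hpq, hu v, hℓ v hv]
      refine ⟨p, by rw [← hq, hpq], fun w hw => by rw [← hq, hpq]; exact hu w⟩
    · rintro ⟨uT, rfl, hred⟩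
      intro v
      obtain ⟨p, q, hpq, -⟩ := Submodule.existsUnique_add_of_isCompl hcompl v
      rw [← hpq, map_add, hred p p.2, hlocal uT q q.2, add_zero, map_add,
        hℓ q q.2, add_zero]
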